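/- For α > 1, a complex number z with Re(z) < 0, and t > 0, define q₂(t) = (1/√(πt))·∫_{α-1}^∞ e^{-ξ²/(4t) + z(ξ-(α-1))} dξ. Then for all λ > 0, ∫₀^∞ e^{-λt}·q₂(t) dt = e^{-(α-1)√λ}/(√λ·(√λ - z)). -/

import Mathlib

/-!
Exchanging the order of integration (the integrand is absolutely integrable because
`Re z < √λ`), the inner `t`-integral is the Laplace transform of the kernel
`e^{-ξ²/(4t)}/√(πt)`, which is `e^{-ξ√λ}/√λ`: the substitution `t = s²/λ` turns it into
Glasser's integral `∫₀^∞ exp(-(s² + c²/s²)) ds = (√π/2) e^{-2c}`, and that one follows from the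
Cauchy–Schlömilch substitution `u = s - c/s` together with the symmetry `s ↦ c/s`.
What is left is the elementary integral `∫_{α-1}^∞ e^{(z-√λ)ξ} dξ`.
-/

open MeasureTheory Set Real

section ChangeOfVariables

variable {E : Type*} [NormedAddCommGroup E] [NormedSpace ℝ E] {c l : ℝ}

lemma image_div_Ioi_zero (hc : 0 < c) : (fun s : ℝ => c / s) '' Ioi 0 = Ioi 0 := by
  ext u
  refine ⟨?_, fun hu => ⟨c / u, div_pos hc hu, div_div_cancel₀ hc.ne'⟩⟩
  rintro ⟨s, hs, rfl⟩
  exact div_pos hc hs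

lemma strictAntiOn_div_Ioi_zero (hc : 0 < c) : StrictAntiOn (fun s : ℝ => c / s) (Ioi 0) :=
  fun _ ha _ _ hab => div_lt_div_of_pos_left hc ha hab

lemma hasDerivAt_const_div {s : ℝ} (hs : s ≠ 0) :
    HasDerivAt (fun s : ℝ => c / s) (-(c / s ^ 2)) s := by
  simpa [div_eq_mul_inv] using (hasDerivAt_inv hs).const_mul c

lemma integral_comp_div_Ioi (g : ℝ → E) (hc : 0 < c) :
    ∫ s in Ioi 0, (c / s ^ 2) • g (c / s) = ∫ s in Ioi 0, g s := by
  have h := integral_image_eq_integral_abs_deriv_smul measurableSet_Ioi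
    (fun s hs => (hasDerivAt_const_div (c := c) (mem_Ioi.1 hs).ne').hasDerivWithinAt)
    (strictAntiOn_div_Ioi_zero hc).injOn g
  rw [image_div_Ioi_zero hc] at h
  rw [h]
  refine setIntegral_congr_fun measurableSet_Ioi fun s hs => ?_
  rw [abs_neg, abs_of_pos (div_pos hc (pow_pos hs 2))]

lemma integrableOn_comp_div_Ioi_iff (g : ℝ → E) (hc : 0 < c) :
    IntegrableOn (fun s => (c / s ^ 2) • g (c / s)) (Ioi 0) ↔ IntegrableOn g (Ioi 0) := by
  have h := integrableOn_image_iff_integrableOn_abs_deriv_smul measurableSet_Ioi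
    (fun s hs => (hasDerivAt_const_div (c := c) (mem_Ioi.1 hs).ne').hasDerivWithinAt)
    (strictAntiOn_div_Ioi_zero hc).injOn g
  rw [image_div_Ioi_zero hc] at h
  rw [h]
  refine integrableOn_congr_fun (fun s hs => ?_) measurableSet_Ioi
  rw [abs_neg, abs_of_pos (div_pos hc (pow_pos hs 2))]

lemma strictMonoOn_sub_div (hc : 0 < c) : StrictMonoOn (fun s : ℝ => s - c / s) (Ioi 0) :=
  fun _ ha _ hb hab => sub_lt_sub hab (strictAntiOn_div_Ioi_zero hc ha hb hab)

lemma image_sub_div_Ioi_zero (hc : 0 < c) : (fun s : ℝ => s - c / s) '' Ioi 0 = univ := by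
  refine eq_univ_of_forall fun u => ?_
  -- the positive root of `s ^ 2 - u s - c = 0`
  set r := √(u ^ 2 + 4 * c)
  have hr : r ^ 2 = u ^ 2 + 4 * c := sq_sqrt (by positivity)
  have hur : |u| < r := by
    rw [← sqrt_sq_eq_abs]; exact sqrt_lt_sqrt (sq_nonneg u) (by linarith)
  have hs : 0 < (u + r) / 2 := by linarith [neg_abs_le u]
  refine ⟨(u + r) / 2, hs, ?_⟩
  have : u + r ≠ 0 := by linarith
  field_simp
  linear_combination hr

lemma hasDerivAt_sub_div {s : ℝ} (hs : s ≠ 0) :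
    HasDerivAt (fun s : ℝ => s - c / s) (1 + c / s ^ 2) s :=
  ((hasDerivAt_id' s).sub (hasDerivAt_const_div hs)).congr_deriv (sub_neg_eq_add _ _)

lemma integral_comp_sub_div_Ioi (g : ℝ → E) (hc : 0 < c) :
    ∫ s in Ioi 0, (1 + c / s ^ 2) • g (s - c / s) = ∫ u, g u := by
  have h := integral_image_eq_integral_abs_deriv_smul measurableSet_Ioi
    (fun s hs => (hasDerivAt_sub_div (c := c) (mem_Ioi.1 hs).ne').hasDerivWithinAt)
    (strictMonoOn_sub_div hc).injOn g
  rw [image_sub_div_Ioi_zero hc, setIntegral_univ] at h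
  rw [h]
  refine setIntegral_congr_fun measurableSet_Ioi fun s hs => ?_
  rw [abs_of_pos (by positivity)]

lemma image_sq_div_Ioi_zero (hl : 0 < l) : (fun s : ℝ => s ^ 2 / l) '' Ioi 0 = Ioi 0 := by
  ext t
  refine ⟨?_, fun ht => ⟨√(l * t), sqrt_pos.2 (mul_pos hl ht), ?_⟩⟩
  · rintro ⟨s, hs, rfl⟩
    exact div_pos (pow_pos hs 2) hl
  · change √(l * t) ^ 2 / l = t
    rw [sq_sqrt (mul_pos hl ht).le]
    field_simp

lemma strictMonoOn_sq_div (hl : 0 < l) : StrictMonoOn (fun s : ℝ => s ^ 2 / l) (Ioi 0) :=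
  fun _ ha _ _ hab => div_lt_div_of_pos_right (pow_lt_pow_left₀ hab (le_of_lt ha) two_ne_zero) hl

lemma hasDerivAt_sq_div (s : ℝ) : HasDerivAt (fun s : ℝ => s ^ 2 / l) (2 * s / l) s := by
  simpa using (hasDerivAt_pow 2 s).div_const l

lemma integral_comp_sq_div_Ioi (g : ℝ → E) (hl : 0 < l) :
    ∫ s in Ioi 0, (2 * s / l) • g (s ^ 2 / l) = ∫ t in Ioi 0, g t := by
  have h := integral_image_eq_integral_abs_deriv_smul measurableSet_Ioi
    (fun s _ => (hasDerivAt_sq_div (l := l) s).hasDerivWithinAt) (strictMonoOn_sq_div hl).injOn g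
  rw [image_sq_div_Ioi_zero hl] at h
  rw [h]
  refine setIntegral_congr_fun measurableSet_Ioi fun s hs => ?_
  rw [abs_of_pos (by have : 0 < s := hs; positivity)]

lemma integrableOn_comp_sq_div_Ioi_iff (g : ℝ → E) (hl : 0 < l) :
    IntegrableOn (fun s => (2 * s / l) • g (s ^ 2 / l)) (Ioi 0) ↔ IntegrableOn g (Ioi 0) := by
  have h := integrableOn_image_iff_integrableOn_abs_deriv_smul measurableSet_Ioi
    (fun s _ => (hasDerivAt_sq_div (l := l) s).hasDerivWithinAt) (strictMonoOn_sq_div hl).injOn g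
  rw [image_sq_div_Ioi_zero hl] at h
  rw [h]
  refine integrableOn_congr_fun (fun s hs => ?_) measurableSet_Ioi
  rw [abs_of_pos (by have : 0 < s := hs; positivity)]

end ChangeOfVariables

lemma integrableOn_exp_neg_sq_add_sq_div_sq (c : ℝ) :
    IntegrableOn (fun s => exp (-(s ^ 2 + c ^ 2 / s ^ 2))) (Ioi 0) := by
  refine ((integrable_exp_neg_mul_sq one_pos).integrableOn).mono' (by fun_prop) ?_
  filter_upwards with s
  rw [norm_of_nonneg (exp_pos _).le, exp_le_exp]
  nlinarith [div_nonneg (sq_nonneg c) (sq_nonneg s)]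

/-- Glasser's integral, by the Cauchy–Schlömilch substitution. -/
theorem integral_exp_neg_sq_add_sq_div_sq {c : ℝ} (hc : 0 < c) :
    ∫ s in Ioi 0, exp (-(s ^ 2 + c ^ 2 / s ^ 2)) = √π / 2 * exp (-(2 * c)) := by
  set f : ℝ → ℝ := fun s => exp (-(s ^ 2 + c ^ 2 / s ^ 2))
  have hf : IntegrableOn f (Ioi 0) := integrableOn_exp_neg_sq_add_sq_div_sq c
  have hf_symm : ∀ s ∈ Ioi (0 : ℝ), (c / s ^ 2) • f (c / s) = (c / s ^ 2) * f s := by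
    intro s hs
    have : s ≠ 0 := (mem_Ioi.1 hs).ne'
    simp only [f, smul_eq_mul]
    congr 3
    field_simp
    ring
  have hg : IntegrableOn (fun s => c / s ^ 2 * f s) (Ioi 0) :=
    ((integrableOn_comp_div_Ioi_iff f hc).2 hf).congr_fun hf_symm measurableSet_Ioi
  have hg_eq : ∫ s in Ioi 0, c / s ^ 2 * f s = ∫ s in Ioi 0, f s := by
    rw [← setIntegral_congr_fun measurableSet_Ioi hf_symm, integral_comp_div_Ioi f hc]
  have h_sq : ∀ s ∈ Ioi (0 : ℝ), (1 + c / s ^ 2) • exp (-(s - c / s) ^ 2) =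
      exp (2 * c) * (f s + c / s ^ 2 * f s) := by
    intro s hs
    have : s ≠ 0 := (mem_Ioi.1 hs).ne'
    have h_exp : -(s - c / s) ^ 2 = 2 * c + -(s ^ 2 + c ^ 2 / s ^ 2) := by
      field_simp
      ring
    rw [smul_eq_mul, h_exp, exp_add]
    ring
  have : √π = exp (2 * c) * (2 * ∫ s in Ioi 0, f s) := by
    calc √π = ∫ u, exp (-u ^ 2) := by simpa using (integral_gaussian 1).symm
      _ = ∫ s in Ioi 0, (1 + c / s ^ 2) • exp (-(s - c / s) ^ 2) :=
        (integral_comp_sub_div_Ioi (fun u => exp (-u ^ 2)) hc).symm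
      _ = exp (2 * c) * (2 * ∫ s in Ioi 0, f s) := by
        rw [setIntegral_congr_fun measurableSet_Ioi h_sq, integral_const_mul,
          integral_add hf hg, hg_eq]
        ring
  rw [this, exp_neg]
  field_simp

section Laplace

variable {l : ℝ}

/-- The kernel of `q₂`: twice the heat kernel `e^{-ξ²/(4t)}/√(4πt)`. -/
noncomputable def heatKernel (t ξ : ℝ) : ℝ := 1 / √(π * t) * exp (-(ξ ^ 2 / (4 * t)))

lemma heatKernel_nonneg (t ξ : ℝ) : 0 ≤ heatKernel t ξ := by
  unfold heatKernel; positivity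

lemma sq_div_smul_exp_mul_heatKernel (hl : 0 < l) (ξ : ℝ) {s : ℝ} (hs : 0 < s) :
    (2 * s / l) • (exp (-(l * (s ^ 2 / l))) * heatKernel (s ^ 2 / l) ξ) =
      2 / √(π * l) * exp (-(s ^ 2 + (ξ * √l / 2) ^ 2 / s ^ 2)) := by
  have h_sqrt : √(π * (s ^ 2 / l)) = √(π * l) * s / l := by
    rw [show π * (s ^ 2 / l) = π * l * (s / l) ^ 2 by field_simp, sqrt_mul (by positivity),
      sqrt_sq (by positivity), mul_div_assoc]
  have h_exp : -(s ^ 2 + (ξ * √l / 2) ^ 2 / s ^ 2) =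
      -(l * (s ^ 2 / l)) + -(ξ ^ 2 / (4 * (s ^ 2 / l))) := by
    rw [div_pow, mul_pow, sq_sqrt hl.le]
    field_simp
    ring
  have : √(π * l) ≠ 0 := by positivity
  rw [heatKernel, h_sqrt, h_exp, exp_add, smul_eq_mul]
  field_simp

lemma integrableOn_exp_mul_heatKernel (hl : 0 < l) (ξ : ℝ) :
    IntegrableOn (fun t => exp (-(l * t)) * heatKernel t ξ) (Ioi 0) := by
  rw [← integrableOn_comp_sq_div_Ioi_iff _ hl]
  refine IntegrableOn.congr_fun ?_
    (fun s hs => (sq_div_smul_exp_mul_heatKernel hl ξ hs).symm) measurableSet_Ioi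
  exact (integrableOn_exp_neg_sq_add_sq_div_sq _).const_mul _

lemma integral_exp_mul_heatKernel (hl : 0 < l) {ξ : ℝ} (hξ : 0 < ξ) :
    ∫ t in Ioi 0, exp (-(l * t)) * heatKernel t ξ = exp (-(ξ * √l)) / √l := by
  rw [← integral_comp_sq_div_Ioi _ hl, setIntegral_congr_fun measurableSet_Ioi
    (fun s hs => sq_div_smul_exp_mul_heatKernel hl ξ hs), integral_const_mul,
    integral_exp_neg_sq_add_sq_div_sq (by positivity), sqrt_mul pi_pos.le]
  have : √π ≠ 0 := by positivity
  field_simp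

lemma integrable_exp_mul_heatKernel_mul_cexp (hl : 0 < l) {a : ℝ} (ha : 0 ≤ a) {z : ℂ}
    (hz : z.re < √l) :
    Integrable (Function.uncurry fun t ξ : ℝ =>
        ((exp (-(l * t)) * heatKernel t ξ : ℝ) : ℂ) * Complex.exp (z * ξ))
      ((volume.restrict (Ioi 0)).prod (volume.restrict (Ioi a))) := by
  have h_meas : AEStronglyMeasurable (Function.uncurry fun t ξ : ℝ =>
      ((exp (-(l * t)) * heatKernel t ξ : ℝ) : ℂ) * Complex.exp (z * ξ))
      ((volume.restrict (Ioi 0)).prod (volume.restrict (Ioi a))) := by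
    unfold heatKernel Function.uncurry
    apply Measurable.aestronglyMeasurable
    fun_prop
  refine (integrable_prod_iff' h_meas).2 ⟨.of_forall fun ξ =>
    (integrableOn_exp_mul_heatKernel hl ξ).ofReal.mul_const (Complex.exp (z * ξ)), ?_⟩
  have h_norm : ∀ ξ ∈ Ioi a, ∫ t in Ioi 0,
      ‖((exp (-(l * t)) * heatKernel t ξ : ℝ) : ℂ) * Complex.exp (z * ξ)‖ =
      exp ((z.re - √l) * ξ) / √l := by
    intro ξ hξ
    simp only [norm_mul, Complex.norm_real, Complex.norm_exp, Complex.mul_re, Complex.ofReal_re,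
      Complex.ofReal_im, mul_zero, sub_zero, norm_of_nonneg
        (mul_nonneg (exp_pos _).le (heatKernel_nonneg _ ξ))]
    rw [integral_mul_const, integral_exp_mul_heatKernel hl (ha.trans_lt hξ), exp_neg, sub_mul,
      exp_sub, mul_comm z.re, mul_comm √l]
    ring
  refine IntegrableOn.congr_fun ?_ (fun ξ hξ => (h_norm ξ hξ).symm) measurableSet_Ioi
  exact (integrableOn_exp_mul_Ioi (sub_neg.2 hz) a).div_const _

lemma integral_exp_mul_heatKernel_mul_cexp (hl : 0 < l) {a : ℝ} (ha : 0 ≤ a) {z : ℂ}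
    (hz : z.re < √l) :
    ∫ t in Ioi 0, ∫ ξ in Ioi a,
        ((exp (-(l * t)) * heatKernel t ξ : ℝ) : ℂ) * Complex.exp (z * ξ) =
      Complex.exp ((z - √l) * a) / (√l * (√l - z)) := by
  have hw : (z - √l).re < 0 := by simpa using hz
  have h_inner : ∀ ξ ∈ Ioi a, ∫ t in Ioi 0,
      ((exp (-(l * t)) * heatKernel t ξ : ℝ) : ℂ) * Complex.exp (z * ξ) =
      Complex.exp ((z - √l) * ξ) / √l := by
    intro ξ hξ
    rw [integral_mul_const, integral_complex_ofReal,
      integral_exp_mul_heatKernel hl (ha.trans_lt hξ)]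
    push_cast
    rw [div_mul_eq_mul_div, ← Complex.exp_add]
    congr 2
    ring
  rw [integral_integral_swap (integrable_exp_mul_heatKernel_mul_cexp hl ha hz),
    setIntegral_congr_fun measurableSet_Ioi h_inner, integral_div,
    integral_exp_mul_complex_Ioi hw]
  have : z - √l ≠ 0 := fun h => by simp [h] at hw
  have : (√l : ℂ) - z ≠ 0 := sub_ne_zero.2 fun h => this (by rw [h, sub_self])
  field_simp
  ring

end Laplace

/-- For `α > 1` and `z ∈ ℂ` with `Re z < 0`, with
`q₂(t) = (1/√(πt)) ∫_{α-1}^∞ e^{-ξ²/(4t) + z(ξ-(α-1))} dξ`, one has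
`∫₀^∞ e^{-λt} q₂(t) dt = e^{-(α-1)√λ}/(√λ (√λ - z))` for every `λ > 0`. -/
theorem laplace_transform_q_two (α : ℝ) (hα : 1 < α) (z : ℂ) (hz : z.re < 0)
    (l : ℝ) (hl : 0 < l) :
    ∫ t in Set.Ioi (0 : ℝ), Complex.exp (-(l * t : ℝ)) *
        (((1 / Real.sqrt (Real.pi * t) : ℝ) : ℂ) *
          ∫ ξ in Set.Ioi (α - 1),
            Complex.exp (-(ξ : ℂ) ^ 2 / (4 * (t : ℂ)) + z * ((ξ : ℂ) - ((α : ℂ) - 1)))) =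
      Complex.exp (-((α : ℂ) - 1) * (Real.sqrt l : ℂ)) /
        ((Real.sqrt l : ℂ) * ((Real.sqrt l : ℂ) - z)) := by
  have h_integrand : ∀ t ∈ Ioi (0 : ℝ), Complex.exp (-(l * t : ℝ)) *
      (((1 / √(π * t) : ℝ) : ℂ) * ∫ ξ in Ioi (α - 1),
        Complex.exp (-(ξ : ℂ) ^ 2 / (4 * (t : ℂ)) + z * ((ξ : ℂ) - ((α : ℂ) - 1)))) =
      Complex.exp (-(z * (α - 1 : ℝ))) * ∫ ξ in Ioi (α - 1),
        ((exp (-(l * t)) * heatKernel t ξ : ℝ) : ℂ) * Complex.exp (z * ξ) := by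
    intro t _
    simp only [← integral_const_mul]
    refine setIntegral_congr_fun measurableSet_Ioi fun ξ _ => ?_
    have h_exp : Complex.exp (-(ξ : ℂ) ^ 2 / (4 * (t : ℂ)) + z * ((ξ : ℂ) - ((α : ℂ) - 1))) =
        Complex.exp (-(z * (α - 1 : ℝ))) * (Complex.exp (-(ξ ^ 2 / (4 * t)) : ℝ) *
          Complex.exp (z * ξ)) := by
      rw [← Complex.exp_add, ← Complex.exp_add]
      push_cast
      congr 1
      ring
    rw [h_exp, heatKernel]
    push_cast
    ring
  have hz' : z.re < √l := hz.trans_le (sqrt_nonneg l)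
  rw [setIntegral_congr_fun measurableSet_Ioi h_integrand, integral_const_mul,
    integral_exp_mul_heatKernel_mul_cexp hl (sub_nonneg.2 hα.le) hz', mul_div_assoc',
    ← Complex.exp_add]
  push_cast
  congr 2
  ring
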